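/- Let $H \in \mathbb{C}^{js\times js}$ be block upper Hessenberg with invertible subdiagonal blocks $\Gamma_2,\ldots,\Gamma_j$, diagonalizable with simple eigenvalues, let $R_B \in \mathbb{C}^{s\times s}$ be invertible, and let $\Lambda(z)$ be the monic block characteristic polynomial of $H$ with respect to $E_1 R_B$. Then for every $z$ not an eigenvalue of $H$: $\Lambda(z)^{-1} = R_B^{-1}\,\Gamma_2^{-1}\cdots\Gamma_j^{-1}\, E_j^* (zI - H)^{-1} E_1\, R_B$. -/

import Mathlib

open Matrix Polynomial

abbrev Mat (s : ℕ) := Matrix (Fin s) (Fin s) ℂ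

/-- The `(p,q)` block (of size `s × s`) of a `js × js` block matrix. -/
def blk {j s : ℕ} (H : Matrix (Fin j × Fin s) (Fin j × Fin s) ℂ) (p q : Fin j) :
    Mat s := Matrix.of fun a b => H (p, a) (q, b)

/-- The `i`-th block canonical vector `E_i = e_i ⊗ I_s`. -/
def blkE {j s : ℕ} (i : Fin j) : Matrix (Fin j × Fin s) (Fin s) ℂ :=
  Matrix.of fun pa b => if pa.1 = i ∧ pa.2 = b then 1 else 0

/-- Block upper Hessenberg: all blocks strictly below the first subdiagonal vanish. -/
def BUH {j s : ℕ} (H : Matrix (Fin j × Fin s) (Fin j × Fin s) ℂ) : Prop :=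
  ∀ p q : Fin j, (q : ℕ) + 1 < (p : ℕ) → blk H p q = 0

/-- The action `P(N) ∘ W := ∑ᵢ Nⁱ W Pᵢ` of a matrix polynomial on a block vector. -/
noncomputable def act {n : Type*} [Fintype n] [DecidableEq n] {s : ℕ}
    (P : Polynomial (Mat s)) (N : Matrix n n ℂ) (W : Matrix n (Fin s) ℂ) :
    Matrix n (Fin s) ℂ :=
  ∑ i ∈ Finset.range (P.natDegree + 1), (N ^ i) * W * P.coeff i

/-- Evaluation of a matrix polynomial at a scalar: `P(z) = ∑ᵢ zⁱ Pᵢ`. -/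
noncomputable def evalS {s : ℕ} (P : Polynomial (Mat s)) (z : ℂ) : Mat s :=
  ∑ i ∈ Finset.range (P.natDegree + 1), z ^ i • P.coeff i

/-- The subdiagonal block `Γ_i = H_{(i-1)(i-2)}` (paper indexing, `2 ≤ i ≤ j`),
with the convention `Γ_i = I` out of range (in particular `Γ₁ = I`). -/
noncomputable def Gam {j s : ℕ} (H : Matrix (Fin j × Fin s) (Fin j × Fin s) ℂ)
    (i : ℕ) : Mat s :=
  if h : 2 ≤ i ∧ i ≤ j then blk H ⟨i - 1, by omega⟩ ⟨i - 2, by omega⟩ else 1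

/-!
With `M = zI - H` and `W = E₁ R_B`, the matrix-valued divided difference
`V = ∑ᵢ (∑_{m<i} zᵐ H^{i-1-m}) W Λᵢ` satisfies `M V = W Λ(z) - Λ(H) ∘ W = W Λ(z)`, so
`Eⱼ* M⁻¹ E₁ R_B Λ(z) = Eⱼ* V`. Since `H` is block upper Hessenberg, the `(j,1)` block of `Hᵏ`
vanishes for `k < j - 1` and equals `Γⱼ ⋯ Γ₂` for `k = j - 1`; as `Λ` is monic of degree `j`,
only the leading term survives and `Eⱼ* V = Γⱼ ⋯ Γ₂ R_B`. Hence
`R_B⁻¹ Γ₂⁻¹ ⋯ Γⱼ⁻¹ Eⱼ* M⁻¹ E₁ R_B` is a left inverse of `Λ(z)`.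
-/

open Finset

section DividedDifference

variable {n : Type*} [Fintype n] [DecidableEq n] {s : ℕ}

noncomputable def powDivDiff (z : ℂ) (N : Matrix n n ℂ) (i : ℕ) : Matrix n n ℂ :=
  ∑ m ∈ range i, (z • 1 : Matrix n n ℂ) ^ m * N ^ (i - 1 - m)

theorem sub_mul_powDivDiff (z : ℂ) (N : Matrix n n ℂ) (i : ℕ) :
    (z • 1 - N) * powDivDiff z N i = z ^ i • 1 - N ^ i := by
  rw [powDivDiff, ((Commute.one_left N).smul_left z).mul_geom_sum₂, _root_.smul_pow, one_pow]

/-- `Q(N) ∘ W` for the divided difference `Q(x, y) = (P(x) - P(y)) / (x - y)`, at `x = z`. -/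
noncomputable def divDiffAct (P : Polynomial (Mat s)) (z : ℂ) (N : Matrix n n ℂ)
    (W : Matrix n (Fin s) ℂ) : Matrix n (Fin s) ℂ :=
  ∑ i ∈ range (P.natDegree + 1), powDivDiff z N i * W * P.coeff i

theorem sub_mul_divDiffAct (P : Polynomial (Mat s)) (z : ℂ) (N : Matrix n n ℂ)
    (W : Matrix n (Fin s) ℂ) :
    (z • 1 - N) * divDiffAct P z N W = W * evalS P z - act P N W := by
  have hterm : ∀ i, (z • 1 - N) * (powDivDiff z N i * W * P.coeff i) =
      z ^ i • (W * P.coeff i) - N ^ i * W * P.coeff i := fun i => by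
    rw [← Matrix.mul_assoc, ← Matrix.mul_assoc, sub_mul_powDivDiff, Matrix.sub_mul, Matrix.sub_mul,
      Matrix.smul_mul, Matrix.smul_mul, Matrix.one_mul]
  simp only [divDiffAct, evalS, act, Matrix.mul_sum, hterm, Finset.sum_sub_distrib, Matrix.mul_smul]

end DividedDifference

section Blocks

variable {j s : ℕ}

theorem blk_mul (M N : Matrix (Fin j × Fin s) (Fin j × Fin s) ℂ) (p q : Fin j) :
    blk (M * N) p q = ∑ r, blk M p r * blk N r q := by
  ext a b
  simp [blk, Matrix.mul_apply, Fintype.sum_prod_type, Matrix.sum_apply]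

theorem blk_one (p q : Fin j) :
    blk (1 : Matrix (Fin j × Fin s) (Fin j × Fin s) ℂ) p q = if p = q then 1 else 0 := by
  ext a b
  by_cases h : p = q <;> simp [blk, Matrix.one_apply, h]

theorem blk_sum {ι : Type*} (t : Finset ι) (M : ι → Matrix (Fin j × Fin s) (Fin j × Fin s) ℂ)
    (p q : Fin j) : blk (∑ i ∈ t, M i) p q = ∑ i ∈ t, blk (M i) p q := by
  ext a b
  simp [blk, Matrix.sum_apply]

theorem blk_smul (c : ℂ) (M : Matrix (Fin j × Fin s) (Fin j × Fin s) ℂ) (p q : Fin j) :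
    blk (c • M) p q = c • blk M p q :=
  rfl

theorem conjTranspose_blkE_mul_mul_blkE (M : Matrix (Fin j × Fin s) (Fin j × Fin s) ℂ)
    (p q : Fin j) : (blkE (s := s) p)ᴴ * M * blkE (s := s) q = blk M p q := by
  ext a b
  simp [blkE, blk, Matrix.mul_apply, Fintype.sum_prod_type, conjTranspose_apply,
    apply_ite (star : ℂ → ℂ), ite_and]

/-- `Γ_{k+1} ⋯ Γ₂`, in the indexing of `Gam`. -/
noncomputable def subdiagProd (H : Matrix (Fin j × Fin s) (Fin j × Fin s) ℂ) : ℕ → Mat s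
  | 0 => 1
  | k + 1 => Gam H (k + 2) * subdiagProd H k

theorem prod_inv_Gam_mul_subdiagProd {H : Matrix (Fin j × Fin s) (Fin j × Fin s) ℂ}
    (hinv : ∀ i : ℕ, 2 ≤ i → i ≤ j → IsUnit (Gam H i)) {k : ℕ} (hk : k < j) :
    ((List.range k).map fun m => (Gam H (m + 2))⁻¹).prod * subdiagProd H k = 1 := by
  induction k with
  | zero => simp [subdiagProd]
  | succ k ih =>
    have hunit := (Matrix.isUnit_iff_isUnit_det _).mp (hinv (k + 2) (by omega) (by omega))
    rw [List.range_succ, List.map_append, List.prod_append, subdiagProd]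
    simp only [List.map_cons, List.map_nil, List.prod_cons, List.prod_nil, mul_one]
    rw [mul_assoc, ← mul_assoc _ (Gam H (k + 2)), Matrix.nonsing_inv_mul _ hunit, one_mul,
      ih (by omega)]

namespace BUH

variable {H : Matrix (Fin j × Fin s) (Fin j × Fin s) ℂ}

theorem blk_pow_eq_zero (hH : BUH H) {k : ℕ} {p q : Fin j} (h : (q : ℕ) + k < p) :
    blk (H ^ k) p q = 0 := by
  induction k generalizing p with
  | zero => simp [blk_one, Fin.ne_of_val_ne (show (p : ℕ) ≠ q by omega)]
  | succ k ih =>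
    rw [pow_succ', blk_mul]
    refine Finset.sum_eq_zero fun r _ => ?_
    by_cases hr : (r : ℕ) + 1 < p
    · rw [hH p r hr, zero_mul]
    · rw [ih (by omega), mul_zero]

theorem blk_pow_eq_subdiagProd (hH : BUH H) {k : ℕ} (hk : k < j) :
    blk (H ^ k) ⟨k, hk⟩ ⟨0, by omega⟩ = subdiagProd H k := by
  induction k with
  | zero => simp [blk_one, subdiagProd]
  | succ k ih =>
    have hsub : blk H ⟨k + 1, hk⟩ ⟨k, by omega⟩ = Gam H (k + 2) := by
      rw [Gam, dif_pos ⟨by omega, by omega⟩]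
      rfl
    rw [pow_succ', blk_mul, Finset.sum_eq_single ⟨k, by omega⟩, ih, hsub, subdiagProd]
    · intro r _ hr
      rcases lt_or_gt_of_ne (Fin.val_ne_of_ne hr) with hlt | hgt
      · rw [hH _ r (by simp; omega), zero_mul]
      · rw [blk_pow_eq_zero hH (by simp; omega), mul_zero]
    · simp

theorem blk_last_first_powDivDiff (hH : BUH H) (hj : 0 < j) (z : ℂ) {i : ℕ} (hi : i ≤ j) :
    blk (powDivDiff z H i) ⟨j - 1, Nat.sub_one_lt_of_lt hj⟩ ⟨0, hj⟩ =
      if i = j then subdiagProd H (j - 1) else 0 := by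
  simp only [powDivDiff, blk_sum, _root_.smul_pow, one_pow, smul_mul_assoc, one_mul, blk_smul]
  have hlow : ∀ m ∈ range i, m ≠ 0 ∨ i ≠ j →
      z ^ m • blk (H ^ (i - 1 - m)) ⟨j - 1, Nat.sub_one_lt_of_lt hj⟩ ⟨0, hj⟩ = 0 := by
    intro m hm hmi
    have := Finset.mem_range.mp hm
    rw [blk_pow_eq_zero hH (by simp; omega), smul_zero]
  split_ifs with hij
  · subst hij
    rw [Finset.sum_eq_single 0 (fun m hm hm0 => hlow m hm (.inl hm0)) (by simp; omega),
      pow_zero, one_smul, Nat.sub_zero]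
    exact blk_pow_eq_subdiagProd hH _
  · exact Finset.sum_eq_zero fun m hm => hlow m hm (.inr hij)

theorem conjTranspose_blkE_mul_divDiffAct (hH : BUH H) (hj : 0 < j) (z : ℂ)
    (R : Matrix (Fin s) (Fin s) ℂ) {Λ : Polynomial (Mat s)} (hmonic : Λ.Monic)
    (hdeg : Λ.natDegree = j) :
    (blkE (s := s) ⟨j - 1, Nat.sub_one_lt_of_lt hj⟩)ᴴ *
        divDiffAct Λ z H (blkE (s := s) ⟨0, hj⟩ * R) = subdiagProd H (j - 1) * R := by
  have hblk : ∀ i ∈ range (j + 1),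
      (blkE (s := s) ⟨j - 1, Nat.sub_one_lt_of_lt hj⟩)ᴴ * powDivDiff z H i *
        blkE (s := s) ⟨0, hj⟩ = if i = j then subdiagProd H (j - 1) else 0 := fun i hi => by
    rw [conjTranspose_blkE_mul_mul_blkE,
      blk_last_first_powDivDiff hH hj z (Nat.lt_succ_iff.mp (Finset.mem_range.mp hi))]
  rw [divDiffAct, hdeg, Matrix.mul_sum,
    Finset.sum_eq_single_of_mem j (Finset.self_mem_range_succ j)]
  · have hlead : Λ.coeff j = 1 := hdeg ▸ hmonic.coeff_natDegree
    simp only [← Matrix.mul_assoc, hblk j (Finset.self_mem_range_succ j), ↓reduceIte, hlead,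
      Matrix.mul_one]
  · intro i hi hij
    simp only [← Matrix.mul_assoc, hblk i hi, if_neg hij, Matrix.zero_mul]

end BUH

end Blocks

/-- Keldysh-type formula for the inverse of the monic block
characteristic polynomial of a diagonalizable block upper Hessenberg matrix with
simple eigenvalues: `Λ(z)⁻¹ = R_B⁻¹ Γ₂⁻¹⋯Γⱼ⁻¹ Eⱼ* (zI − H)⁻¹ E₁ R_B`. -/
theorem monic_char_poly_inverse {j s : ℕ} (hj : 0 < j)
    (H : Matrix (Fin j × Fin s) (Fin j × Fin s) ℂ) (hH : BUH H)
    (hinv : ∀ i : ℕ, 2 ≤ i → i ≤ j → IsUnit (Gam H i))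
    (RB : Mat s) (hRB : IsUnit RB)
    (Λ : Polynomial (Mat s)) (hmonic : Λ.Monic) (hdeg : Λ.natDegree = j)
    (hann : act Λ H (blkE (⟨0, hj⟩ : Fin j) * RB) = 0)
    (z : ℂ)
    (hz : (z • (1 : Matrix (Fin j × Fin s) (Fin j × Fin s) ℂ) - H).det ≠ 0) :
    (evalS Λ z)⁻¹ =
      RB⁻¹ * ((List.range (j - 1)).map (fun m => (Gam H (m + 2))⁻¹)).prod *
        ((blkE (s := s) (⟨j - 1, by omega⟩ : Fin j))ᴴ * (z • 1 - H)⁻¹ *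
          blkE (⟨0, hj⟩ : Fin j)) * RB := by
  set L := ((List.range (j - 1)).map fun m => (Gam H (m + 2))⁻¹).prod
  -- In the statement `blkE ⟨0, hj⟩ * RB` elaborates with the (defeq) `CStarMatrix` product;
  -- `hann'` and the first line of the `calc` restate it with the `Matrix` one.
  have hann' : act Λ H (blkE (s := s) ⟨0, hj⟩ * RB) = 0 := hann
  have hV : (z • 1 - H)⁻¹ * (blkE (s := s) ⟨0, hj⟩ * RB * evalS Λ z) =
      divDiffAct Λ z H (blkE (s := s) ⟨0, hj⟩ * RB) := by
    rw [← sub_zero (blkE (s := s) ⟨0, hj⟩ * RB * evalS Λ z), ← hann', ← sub_mul_divDiffAct,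
      Matrix.nonsing_inv_mul_cancel_left _ _ hz.isUnit]
  refine Matrix.inv_eq_left_inv ?_
  calc RB⁻¹ * L * ((blkE (s := s) (⟨j - 1, by omega⟩ : Fin j))ᴴ * (z • 1 - H)⁻¹ *
        blkE (s := s) ⟨0, hj⟩) * RB * evalS Λ z
      = RB⁻¹ * L * ((blkE (s := s) (⟨j - 1, by omega⟩ : Fin j))ᴴ *
          ((z • 1 - H)⁻¹ * (blkE (s := s) ⟨0, hj⟩ * RB * evalS Λ z))) := by
        simp only [Matrix.mul_assoc]
    _ = RB⁻¹ * (L * subdiagProd H (j - 1)) * RB := by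
        rw [hV, hH.conjTranspose_blkE_mul_divDiffAct hj z RB hmonic hdeg]
        simp only [Matrix.mul_assoc]
    _ = 1 := by
        rw [prod_inv_Gam_mul_subdiagProd hinv (by omega), Matrix.mul_one,
          Matrix.nonsing_inv_mul _ ((Matrix.isUnit_iff_isUnit_det RB).mp hRB)]
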